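/- arXiv:1311.0634 — 4 statements merged into one kernel-verified Lean document; each statement's English description precedes it below -/
import Mathlib

section
/- Let A and S be p×p real positive definite matrices with AS = SA, and let n > 0 be a real number. Then the matrix X = (1/√n)·A^{1/2}S^{1/2} is positive definite and satisfies the matrix equation A X⁻¹ S + S X⁻¹ A = 2n X. -/
open Matrix

section OldSqrt

open scoped ComplexOrder

/-- The positive semidefinite square root of a positive semidefinite matrix
(the definition of the older Mathlib, removed since). -/
noncomputable def Matrix.PosSemidef.sqrt {𝕜 : Type*} [RCLike 𝕜] {n : Type*} [Fintype n]
    [DecidableEq n] {A : Matrix n n 𝕜} (hA : A.PosSemidef) : Matrix n n 𝕜 :=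
  hA.1.eigenvectorUnitary.1 * diagonal ((↑) ∘ (√·) ∘ hA.1.eigenvalues) *
    (star hA.1.eigenvectorUnitary : Matrix n n 𝕜)

end OldSqrt

section OldSqrtLemmas

open scoped ComplexOrder

theorem Matrix.PosSemidef.sqrt_mul_self {𝕜 : Type*} [RCLike 𝕜] {n : Type*} [Fintype n]
    [DecidableEq n] {A : Matrix n n 𝕜} (hA : A.PosSemidef) : hA.sqrt * hA.sqrt = A := by
  set C : Matrix n n 𝕜 := hA.1.eigenvectorUnitary.1 with hCdef
  set E : Matrix n n 𝕜 := diagonal ((↑) ∘ (√·) ∘ hA.1.eigenvalues) with hEdef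
  have hC : star C * C = 1 := by simp [C]
  have h1 : hA.sqrt * hA.sqrt = C * (E * E) * star C := by
    change C * E * star C * (C * E * star C) = _
    calc C * E * star C * (C * E * star C) = C * E * (star C * C) * E * star C := by
          simp only [Matrix.mul_assoc]
      _ = _ := by rw [hC, Matrix.mul_one, Matrix.mul_assoc C E E]
  rw [h1, hEdef, diagonal_mul_diagonal]
  have hd : ((fun i => (((↑) ∘ (√·) ∘ hA.1.eigenvalues) i : 𝕜) * (((↑) ∘ (√·) ∘ hA.1.eigenvalues) i : 𝕜)))
      = RCLike.ofReal ∘ hA.1.eigenvalues := by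
    funext i
    simp only [Function.comp_apply]
    rw [← RCLike.ofReal_mul, Real.mul_self_sqrt (hA.eigenvalues_nonneg i)]
  rw [hd]
  conv_rhs => rw [hA.1.spectral_theorem]
  rw [Unitary.conjStarAlgAut_apply]

theorem Matrix.PosSemidef.posSemidef_sqrt {𝕜 : Type*} [RCLike 𝕜] {n : Type*} [Fintype n]
    [DecidableEq n] {A : Matrix n n 𝕜} (hA : A.PosSemidef) : hA.sqrt.PosSemidef := by
  unfold Matrix.PosSemidef.sqrt
  rw [star_eq_conjTranspose]
  apply PosSemidef.mul_mul_conjTranspose_same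
  refine posSemidef_diagonal_iff.mpr fun i => ?_
  simp only [Function.comp_apply]
  exact RCLike.ofReal_nonneg.mpr (Real.sqrt_nonneg _)

end OldSqrtLemmas

private lemma frob_zero {p : ℕ} {M : Matrix (Fin p) (Fin p) ℝ}
    (h : (Mᴴ * M).trace = 0) : M = 0 := by
  have hsum : ∑ j, ∑ i, M i j * M i j = 0 := by
    simpa [Matrix.trace, Matrix.mul_apply, Matrix.diag, Matrix.conjTranspose_apply] using h
  have h1 : ∀ j ∈ Finset.univ, ∑ i, M i j * M i j = 0 := by
    intro j _
    have := (Finset.sum_eq_zero_iff_of_nonneg (fun j _ =>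
      Finset.sum_nonneg fun i _ => mul_self_nonneg (M i j))).mp hsum
    exact this j (Finset.mem_univ j)
  ext i j
  have := (Finset.sum_eq_zero_iff_of_nonneg (fun i _ =>
    mul_self_nonneg (M i j))).mp (h1 j (Finset.mem_univ j)) i (Finset.mem_univ i)
  simpa using mul_self_eq_zero.mp this

private lemma det_sqrt_ne_zero {p : ℕ} {A : Matrix (Fin p) (Fin p) ℝ}
    (hA : A.PosDef) : (hA.posSemidef.sqrt).det ≠ 0 := by
  intro h0
  have h2 : hA.posSemidef.sqrt * hA.posSemidef.sqrt = A := hA.posSemidef.sqrt_mul_self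
  have := congrArg Matrix.det h2
  rw [Matrix.det_mul, h0, mul_zero] at this
  exact (ne_of_gt hA.det_pos) this.symm

/-- If `A` is positive definite and `S` is hermitian with `A*S = S*A`, then
`√A` commutes with `S`. -/
private lemma sqrt_comm {p : ℕ} {A S : Matrix (Fin p) (Fin p) ℝ} (hA : A.PosDef)
    (hS : S.IsHermitian) (h : A * S = S * A) :
    hA.posSemidef.sqrt * S = S * hA.posSemidef.sqrt := by
  set a := hA.posSemidef.sqrt with ha_def
  have haps : a.PosSemidef := hA.posSemidef.posSemidef_sqrt
  have ha2 : a * a = A := hA.posSemidef.sqrt_mul_self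
  set C := S * a - a * S with hC_def
  have hC1 : a * C + C * a = 0 := by
    have key : a * C + C * a = S * (a * a) - (a * a) * S := by
      simp only [hC_def]; noncomm_ring
    rw [ha2, h, sub_self] at key
    exact key
  have hCa : a * C = -(C * a) := eq_neg_of_add_eq_zero_left hC1
  have hCH : Cᴴ = -C := by
    simp only [hC_def, conjTranspose_sub, conjTranspose_mul, hS.eq, haps.1.eq]
    abel
  -- b is the fourth root of A
  set b := haps.sqrt with hb_def
  have hb2 : b * b = a := haps.sqrt_mul_self
  have hbH : bᴴ = b := haps.posSemidef_sqrt.1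
  have hdet_a : a.det ≠ 0 := det_sqrt_ne_zero hA
  have hdet_b : b.det ≠ 0 := by
    intro h0
    have := congrArg Matrix.det hb2
    rw [Matrix.det_mul, h0, mul_zero] at this
    exact hdet_a this.symm
  have hD : b * C = 0 := by
    have hBCH : (b * C)ᴴ = -(C * b) := by
      rw [conjTranspose_mul, hCH, hbH]; noncomm_ring
    have e1 : (b * C)ᴴ * (b * C) = C * C * a := by
      rw [hBCH]
      have : C * (a * C) = C * -(C * a) := by rw [hCa]
      calc -(C * b) * (b * C) = -(C * (b * b) * C) := by noncomm_ring
        _ = -(C * (a * C)) := by rw [hb2]; noncomm_ring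
        _ = -(C * -(C * a)) := by rw [hCa]
        _ = C * C * a := by noncomm_ring
    have e2 : (b * C) * (b * C)ᴴ = -(b * (C * C) * b) := by
      rw [hBCH]; noncomm_ring
    have ht : ((b * C)ᴴ * (b * C)).trace = -(((b * C)ᴴ * (b * C)).trace) := by
      conv_lhs => rw [← Matrix.trace_mul_comm]
      rw [e2, e1]
      rw [Matrix.trace_neg]
      congr 1
      calc (b * (C * C) * b).trace = (C * C * (b * b)).trace := by
            rw [Matrix.trace_mul_comm (b * (C * C)) b, ← Matrix.mul_assoc,
              Matrix.trace_mul_comm (b * b) (C * C)]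
        _ = (C * C * a).trace := by rw [hb2]
    have ht0 : ((b * C)ᴴ * (b * C)).trace = 0 := by linarith [ht]
    exact frob_zero ht0
  have hC0 : C = 0 := by
    have : b⁻¹ * (b * C) = C := by
      rw [← Matrix.mul_assoc, Matrix.nonsing_inv_mul b (Ne.isUnit hdet_b), Matrix.one_mul]
    rw [hD, Matrix.mul_zero] at this
    exact this.symm
  have := sub_eq_zero.mp hC0
  exact this.symm

private lemma posDef_of_psd_det {p : ℕ} {M : Matrix (Fin p) (Fin p) ℝ}
    (h : M.PosSemidef) (hd : M.det ≠ 0) : M.PosDef := by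
  refine .of_dotProduct_mulVec_pos h.1 fun x hx => ?_
  have hMx : M *ᵥ x ≠ 0 := by
    intro h0
    have hinj : Function.Injective M.mulVec :=
      mulVec_injective_iff_isUnit.2 ((Matrix.isUnit_iff_isUnit_det M).2 hd.isUnit)
    exact hx (hinj (by simpa using h0))
  rcases (h.dotProduct_mulVec_nonneg x).lt_or_eq with hlt | heq
  · exact hlt
  · exact absurd ((h.dotProduct_mulVec_zero_iff x).mp heq.symm) hMx

/-- If `A`, `S` are positive definite with `AS = SA` and `n > 0`, then
`X = (1/√n)·A^{1/2}S^{1/2}` is positive definite and `A X⁻¹ S + S X⁻¹ A = 2n X`. -/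
theorem mode_solution_of_commuting {p : ℕ} (A S : Matrix (Fin p) (Fin p) ℝ)
    (hA : A.PosDef) (hS : S.PosDef) (hcomm : A * S = S * A) (n : ℝ) (hn : 0 < n) :
    ((1 / Real.sqrt n) • (hA.posSemidef.sqrt * hS.posSemidef.sqrt)).PosDef ∧
    A * ((1 / Real.sqrt n) • (hA.posSemidef.sqrt * hS.posSemidef.sqrt))⁻¹ * S +
      S * ((1 / Real.sqrt n) • (hA.posSemidef.sqrt * hS.posSemidef.sqrt))⁻¹ * A
      = (2 * n) • ((1 / Real.sqrt n) • (hA.posSemidef.sqrt * hS.posSemidef.sqrt)) := by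
  set a := hA.posSemidef.sqrt with ha_def
  set s := hS.posSemidef.sqrt with hs_def
  have ha2 : a * a = A := hA.posSemidef.sqrt_mul_self
  have hs2 : s * s = S := hS.posSemidef.sqrt_mul_self
  have haps : a.PosSemidef := hA.posSemidef.posSemidef_sqrt
  have hsps : s.PosSemidef := hS.posSemidef.posSemidef_sqrt
  have hdet_a : a.det ≠ 0 := det_sqrt_ne_zero hA
  have hdet_s : s.det ≠ 0 := det_sqrt_ne_zero hS
  have hsqrtn : (0:ℝ) < Real.sqrt n := Real.sqrt_pos.mpr hn
  have hsqrtn' : Real.sqrt n ≠ 0 := ne_of_gt hsqrtn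
  have hnn : Real.sqrt n * Real.sqrt n = n := Real.mul_self_sqrt (le_of_lt hn)
  -- commutation facts
  have h1 : a * S = S * a := sqrt_comm hA hS.1 hcomm
  have h2 : s * a = a * s := sqrt_comm hS haps.1 (by rw [h1])
  have hsa : a * s = s * a := h2.symm
  -- X' = a * s is positive definite
  have hdet_as : (a * s).det ≠ 0 := by
    rw [Matrix.det_mul]; exact mul_ne_zero hdet_a hdet_s
  have hXps : (a * s).PosSemidef := by
    -- conjugate: a*s = √a * s * (√a)ᴴ
    have hb2 : haps.sqrt * haps.sqrt = a := haps.sqrt_mul_self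
    have hbs : haps.sqrt * s = s * haps.sqrt := by
      have haPD : a.PosDef := posDef_of_psd_det haps hdet_a
      have := sqrt_comm haPD hsps.1 hsa
      convert this using 2
    have key : a * s = haps.sqrt * s * (haps.sqrt)ᴴ := by
      rw [haps.posSemidef_sqrt.1]
      calc a * s = haps.sqrt * (haps.sqrt * s) := by rw [← Matrix.mul_assoc, hb2]
        _ = haps.sqrt * (s * haps.sqrt) := by rw [hbs]
        _ = haps.sqrt * s * haps.sqrt := by rw [Matrix.mul_assoc]
    rw [key]
    exact hsps.mul_mul_conjTranspose_same haps.sqrt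
  have hXPD : (a * s).PosDef := posDef_of_psd_det hXps hdet_as
  -- scalar multiple is positive definite
  have hcpos : (0:ℝ) < 1 / Real.sqrt n := by positivity
  have hsmulPD : ((1 / Real.sqrt n) • (a * s)).PosDef := by
    refine .of_dotProduct_mulVec_pos ?_ fun x hx => ?_
    · unfold Matrix.IsHermitian
      rw [conjTranspose_smul, hXPD.1.eq]
      simp
    · rw [smul_mulVec, dotProduct_smul, smul_eq_mul]
      exact mul_pos hcpos (hXPD.dotProduct_mulVec_pos hx)
  refine ⟨hsmulPD, ?_⟩
  -- compute the inverse of X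
  have hXinv : ((1 / Real.sqrt n) • (a * s))⁻¹ = Real.sqrt n • (s⁻¹ * a⁻¹) := by
    apply Matrix.inv_eq_right_inv
    rw [Matrix.smul_mul, Matrix.mul_smul, smul_smul]
    have : (a * s) * (s⁻¹ * a⁻¹) = 1 := by
      calc (a * s) * (s⁻¹ * a⁻¹) = a * (s * s⁻¹) * a⁻¹ := by
            rw [Matrix.mul_assoc, Matrix.mul_assoc, Matrix.mul_assoc]
        _ = a * a⁻¹ := by rw [Matrix.mul_nonsing_inv s hdet_s.isUnit, Matrix.mul_one]
        _ = 1 := Matrix.mul_nonsing_inv a hdet_a.isUnit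
    rw [this, one_div, inv_mul_cancel₀ hsqrtn', one_smul]
  rw [hXinv]
  -- inverse commutation facts
  have hinv_sa : a * s⁻¹ = s⁻¹ * a := by
    calc a * s⁻¹ = s⁻¹ * (s * a) * s⁻¹ := by
          rw [← Matrix.mul_assoc, Matrix.nonsing_inv_mul s hdet_s.isUnit, Matrix.one_mul]
      _ = s⁻¹ * (a * s) * s⁻¹ := by rw [h2]
      _ = s⁻¹ * a * (s * s⁻¹) := by rw [Matrix.mul_assoc, Matrix.mul_assoc, Matrix.mul_assoc]
      _ = s⁻¹ * a := by rw [Matrix.mul_nonsing_inv s hdet_s.isUnit, Matrix.mul_one]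
  have E1 : A * (s⁻¹ * a⁻¹) * S = a * s := by
    rw [← ha2, ← hs2]
    calc a * a * (s⁻¹ * a⁻¹) * (s * s)
        = a * (a * s⁻¹) * a⁻¹ * s * s := by noncomm_ring
      _ = a * (s⁻¹ * a) * a⁻¹ * s * s := by rw [hinv_sa]
      _ = a * s⁻¹ * (a * a⁻¹) * s * s := by noncomm_ring
      _ = a * s⁻¹ * s * s := by rw [Matrix.mul_nonsing_inv a hdet_a.isUnit, Matrix.mul_one]
      _ = a * (s⁻¹ * s) * s := by noncomm_ring
      _ = a * s := by rw [Matrix.nonsing_inv_mul s hdet_s.isUnit, Matrix.mul_one]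
  have E2 : S * (s⁻¹ * a⁻¹) * A = a * s := by
    rw [← ha2, ← hs2]
    calc s * s * (s⁻¹ * a⁻¹) * (a * a)
        = s * (s * s⁻¹) * (a⁻¹ * a) * a := by noncomm_ring
      _ = s * a := by
          rw [Matrix.mul_nonsing_inv s hdet_s.isUnit, Matrix.nonsing_inv_mul a hdet_a.isUnit,
            Matrix.mul_one, Matrix.mul_one]
      _ = a * s := h2
  rw [Matrix.mul_smul, Matrix.smul_mul, Matrix.mul_smul, Matrix.smul_mul, E1, E2,
    ← add_smul, smul_smul]
  congr 1
  field_simp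
  nlinarith [hnn]
end

section
/- Let A and S be p×p real positive definite matrices and let n > 0 be a real number. If X and Y are positive definite p×p matrices both satisfying the matrix equation A X⁻¹ S + S X⁻¹ A = 2n X and A Y⁻¹ S + S Y⁻¹ A = 2n Y, then X = Y; that is, the positive definite solution of this equation is unique. -/
open Matrix

private lemma trace_ct_mul_self_nonneg {k : ℕ} (G : Matrix (Fin k) (Fin k) ℝ) :
    0 ≤ (Gᴴ * G).trace := by
  rw [Matrix.trace]
  refine Finset.sum_nonneg fun i _ => ?_
  simp only [Matrix.diag_apply, Matrix.mul_apply, Matrix.conjTranspose_apply, star_trivial]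
  exact Finset.sum_nonneg fun j _ => mul_self_nonneg _

private lemma trace_ct_mul_self_eq_zero {k : ℕ} {G : Matrix (Fin k) (Fin k) ℝ}
    (h : (Gᴴ * G).trace = 0) : G = 0 := by
  have hdiag : ∀ i, (Gᴴ * G) i i = ∑ j, G j i * G j i := by
    intro i
    simp [Matrix.mul_apply, Matrix.conjTranspose_apply]
  rw [Matrix.trace] at h
  have h1 := (Finset.sum_eq_zero_iff_of_nonneg (fun i _ => by
    rw [Matrix.diag_apply, hdiag]
    exact Finset.sum_nonneg fun j _ => mul_self_nonneg _)).mp h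
  ext i j
  have h2 := h1 j (Finset.mem_univ j)
  rw [Matrix.diag_apply, hdiag] at h2
  have h3 := (Finset.sum_eq_zero_iff_of_nonneg (fun a _ => mul_self_nonneg (G a j))).mp h2
  have := h3 i (Finset.mem_univ i)
  simpa [mul_self_eq_zero] using this

open scoped MatrixOrder in
private lemma posSemidef_iff_eq_transpose_mul_self {k : ℕ} {A : Matrix (Fin k) (Fin k) ℝ} :
    A.PosSemidef ↔ ∃ B : Matrix (Fin k) (Fin k) ℝ, A = Bᴴ * B := by
  constructor
  · intro hA
    refine ⟨CFC.sqrt A, ?_⟩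
    rw [(Matrix.nonneg_iff_posSemidef.mp (CFC.sqrt_nonneg A)).isHermitian.eq,
      CFC.sqrt_mul_sqrt_self A (Matrix.nonneg_iff_posSemidef.mpr hA)]
  · rintro ⟨B, rfl⟩
    exact posSemidef_conjTranspose_mul_self B

private lemma trace_psd_mul_nonneg {k : ℕ} {A N : Matrix (Fin k) (Fin k) ℝ}
    (hA : A.PosSemidef) (hN : N.PosSemidef) : 0 ≤ (A * N).trace := by
  obtain ⟨B, rfl⟩ := posSemidef_iff_eq_transpose_mul_self.mp hA
  obtain ⟨C, rfl⟩ := posSemidef_iff_eq_transpose_mul_self.mp hN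
  have h1 : Bᴴ * B * (Cᴴ * C) = Bᴴ * (B * Cᴴ * C) := by
    simp only [Matrix.mul_assoc]
  rw [h1, Matrix.trace_mul_comm]
  have h2 : B * Cᴴ * C * Bᴴ = (C * Bᴴ)ᴴ * (C * Bᴴ) := by
    simp [Matrix.mul_assoc]
  rw [h2]
  exact trace_ct_mul_self_nonneg _

open scoped MatrixOrder in
private lemma psd_eq_zero_of_trace_eq_zero {k : ℕ} {A N : Matrix (Fin k) (Fin k) ℝ}
    (hA : A.PosDef) (hN : N.PosSemidef) (h : (A * N).trace = 0) : N = 0 := by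
  obtain ⟨C, rfl⟩ := posSemidef_iff_eq_transpose_mul_self.mp hN
  set R := CFC.sqrt A with hRdef
  have hRR : R * R = A := CFC.sqrt_mul_sqrt_self A (Matrix.nonneg_iff_posSemidef.mpr hA.posSemidef)
  have hRh : Rᴴ = R := (Matrix.nonneg_iff_posSemidef.mp (CFC.sqrt_nonneg A)).isHermitian
  have e1 : (C * R)ᴴ * (C * R) = R * (Cᴴ * C * R) := by
    rw [conjTranspose_mul, hRh]
    simp only [Matrix.mul_assoc]
  have e2 : Cᴴ * C * R * R = Cᴴ * C * A := by rw [Matrix.mul_assoc, hRR]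
  have key : ((C * R)ᴴ * (C * R)).trace = (A * (Cᴴ * C)).trace := by
    rw [e1, Matrix.trace_mul_comm R (Cᴴ * C * R), e2, Matrix.trace_mul_comm]
  rw [← key] at h
  have hCR : C * R = 0 := trace_ct_mul_self_eq_zero h
  have hCA : C * A = 0 := by
    rw [← hRR, ← Matrix.mul_assoc, hCR, Matrix.zero_mul]
  have hC : C = 0 := by
    have hdet : IsUnit A.det := isUnit_iff_ne_zero.mpr hA.det_pos.ne'
    calc C = C * A * A⁻¹ := by rw [Matrix.mul_assoc, Matrix.mul_nonsing_inv _ hdet, Matrix.mul_one]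
    _ = 0 := by rw [hCA, Matrix.zero_mul]
  simp [hC]

/-- For positive definite `A`, `S` and `n > 0`, the positive definite solution of
the matrix equation `A X⁻¹ S + S X⁻¹ A = 2n X` is unique. -/
theorem mode_equation_unique_posDef_solution {p : ℕ} (A S X Y : Matrix (Fin p) (Fin p) ℝ)
    (hA : A.PosDef) (hS : S.PosDef) (n : ℝ) (hn : 0 < n)
    (hX : X.PosDef) (hY : Y.PosDef)
    (heqX : A * X⁻¹ * S + S * X⁻¹ * A = (2 * n) • X)
    (heqY : A * Y⁻¹ * S + S * Y⁻¹ * A = (2 * n) • Y) :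
    X = Y := by
  have hdX : IsUnit X.det := isUnit_iff_ne_zero.mpr hX.det_pos.ne'
  have hdY : IsUnit Y.det := isUnit_iff_ne_zero.mpr hY.det_pos.ne'
  set D := X - Y with hDdef
  set M := Y⁻¹ - X⁻¹ with hMdef
  have hDh : Dᴴ = D := by
    rw [hDdef, conjTranspose_sub, hX.isHermitian, hY.isHermitian]
  have hMh : Mᴴ = M := by
    rw [hMdef, conjTranspose_sub, hX.isHermitian.inv, hY.isHermitian.inv]
  -- M = Y⁻¹ * D * X⁻¹
  have hM2 : M = Y⁻¹ * D * X⁻¹ := by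
    rw [hMdef, hDdef, Matrix.mul_sub, Matrix.sub_mul,
      Matrix.nonsing_inv_mul Y hdY, Matrix.mul_assoc,
      Matrix.mul_nonsing_inv X hdX, Matrix.mul_one, Matrix.one_mul]
  -- key equation
  have hkey : A * M * S + S * M * A = -((2 * n) • D) := by
    rw [hMdef]
    simp only [Matrix.mul_sub, Matrix.sub_mul]
    have : A * Y⁻¹ * S - A * X⁻¹ * S + (S * Y⁻¹ * A - S * X⁻¹ * A)
        = (A * Y⁻¹ * S + S * Y⁻¹ * A) - (A * X⁻¹ * S + S * X⁻¹ * A) := by abel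
    rw [this, heqX, heqY, hDdef, smul_sub]
    abel
  -- traces
  have hP : (D * Y⁻¹ * Dᴴ).PosSemidef := hY.inv.posSemidef.mul_mul_conjTranspose_same D
  rw [hDh] at hP
  have hMSM : (M * S * Mᴴ).PosSemidef := hS.posSemidef.mul_mul_conjTranspose_same M
  have hMAM : (M * A * Mᴴ).PosSemidef := hA.posSemidef.mul_mul_conjTranspose_same M
  rw [hMh] at hMSM hMAM
  have t1 : 0 ≤ (A * M * S * M).trace := by
    have := trace_psd_mul_nonneg hA.posSemidef hMSM
    simpa only [Matrix.mul_assoc] using this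
  have t2 : 0 ≤ (S * M * A * M).trace := by
    have := trace_psd_mul_nonneg hS.posSemidef hMAM
    simpa only [Matrix.mul_assoc] using this
  have hDM : (D * M).trace = ((D * Y⁻¹ * D) * X⁻¹).trace := by
    rw [hM2]
    simp only [Matrix.mul_assoc]
  have hτnn : 0 ≤ ((D * Y⁻¹ * D) * X⁻¹).trace := by
    rw [Matrix.trace_mul_comm]
    exact trace_psd_mul_nonneg hX.inv.posSemidef hP
  -- trace both sides of hkey against M
  have htr : (A * M * S * M).trace + (S * M * A * M).trace
      = -((2 * n) * ((D * Y⁻¹ * D) * X⁻¹).trace) := by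
    have := congrArg (fun Z => (Z * M).trace) hkey
    simp only [Matrix.add_mul, Matrix.trace_add, Matrix.neg_mul, Matrix.smul_mul,
      Matrix.trace_neg, Matrix.trace_smul, smul_eq_mul] at this
    rw [← hDM]
    exact this
  have hτle : ((D * Y⁻¹ * D) * X⁻¹).trace ≤ 0 := by
    nlinarith [add_nonneg t1 t2]
  have hτ : ((D * Y⁻¹ * D) * X⁻¹).trace = 0 := le_antisymm hτle hτnn
  have hPzero : D * Y⁻¹ * D = 0 := by
    apply psd_eq_zero_of_trace_eq_zero hX.inv hP
    rw [Matrix.trace_mul_comm]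
    exact hτ
  -- conclude D = 0
  obtain ⟨B, hB⟩ := posSemidef_iff_eq_transpose_mul_self.mp hY.inv.posSemidef
  have hBD : (B * D)ᴴ * (B * D) = 0 := by
    rw [conjTranspose_mul, hDh]
    calc D * Bᴴ * (B * D) = D * (Bᴴ * B) * D := by simp only [Matrix.mul_assoc]
    _ = 0 := by rw [← hB, hPzero]
  have hBD0 : B * D = 0 := conjTranspose_mul_self_eq_zero.mp hBD
  have hYD : Y⁻¹ * D = 0 := by
    rw [hB, Matrix.mul_assoc, hBD0, Matrix.mul_zero]
  have hD0 : D = 0 := by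
    calc D = Y * (Y⁻¹ * D) := by
          rw [← Matrix.mul_assoc, Matrix.mul_nonsing_inv Y hdY, Matrix.one_mul]
    _ = 0 := by rw [hYD, Matrix.mul_zero]
  have := sub_eq_zero.mp hD0
  exact this
end

section
/- Given a real number φ, a positive definite p×p real matrix W, and a real constant p₀ > 0, define the sequence of matrices by P₀ = p₀·I_p and P_t = (φ²P_{t-1} + W)(φ²P_{t-1} + W + I_p)⁻¹ for t ≥ 1. Then the sequence {P_t} converges: there exists a p×p real matrix P such that P_t → P entrywise as t → ∞. -/
open Matrix Filter

lemma scalar_riccati_aux (c w : ℝ) (hc : 0 ≤ c) (hw : 0 < w) (s : ℕ → ℝ) (hs0 : 0 ≤ s 0)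
    (hrec : ∀ t, s (t + 1) = (c * s t + w) / (c * s t + w + 1)) :
    (∀ t, 0 ≤ s t) ∧ ∃ l : ℝ, Tendsto s atTop (nhds l) := by
  have hden : ∀ x : ℝ, 0 ≤ x → 0 < c * x + w + 1 := by
    intro x hx; nlinarith
  have hnn : ∀ t, 0 ≤ s t := by
    intro t
    induction t with
    | zero => exact hs0
    | succ n ih =>
      rw [hrec]
      exact div_nonneg (by nlinarith) (le_of_lt (hden _ ih))
  refine ⟨hnn, ?_⟩
  have hub : ∀ t, s t ≤ max (s 0) 1 := by
    intro t
    cases t with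
    | zero => exact le_max_left _ _
    | succ n =>
      refine le_trans ?_ (le_max_right _ _)
      rw [hrec]
      rw [div_le_one (hden _ (hnn n))]
      linarith
  have hmono : ∀ a b : ℝ, 0 ≤ a → a ≤ b →
      (c * a + w) / (c * a + w + 1) ≤ (c * b + w) / (c * b + w + 1) := by
    intro a b ha hab
    rw [div_le_div_iff₀ (hden _ ha) (hden _ (le_trans ha hab))]
    nlinarith
  rcases le_total (s 0) (s 1) with h01 | h01
  · have hstep : ∀ n, s n ≤ s (n + 1) := by
      intro n
      induction n with
      | zero => exact h01
      | succ k ih =>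
        rw [hrec k, hrec (k + 1)]
        exact hmono _ _ (hnn k) ih
    refine ⟨_, tendsto_atTop_ciSup (monotone_nat_of_le_succ hstep) ?_⟩
    exact ⟨max (s 0) 1, by rintro x ⟨t, rfl⟩; exact hub t⟩
  · have hstep : ∀ n, s (n + 1) ≤ s n := by
      intro n
      induction n with
      | zero => exact h01
      | succ k ih =>
        rw [hrec k, hrec (k + 1)]
        exact hmono _ _ (hnn (k + 1)) ih
    refine ⟨_, tendsto_atTop_ciInf (antitone_nat_of_succ_le hstep) ?_⟩
    exact ⟨0, by rintro x ⟨t, rfl⟩; exact hnn t⟩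

lemma conj_mul_conj {n : ℕ} (V A B : Matrix (Fin n) (Fin n) ℝ)
    (hV2 : star V * V = 1) :
    (V * A * star V) * (V * B * star V) = V * (A * B) * star V := by
  simp only [← Matrix.mul_assoc]
  rw [Matrix.mul_assoc (V * A) (star V) V, hV2, Matrix.mul_one]

/-- With `P₀ = p₀·I` and `P_{t+1} = (φ²P_t + W)(φ²P_t + W + I)⁻¹` for positive
definite `W` and `p₀ > 0`, the sequence `{P_t}` converges (entrywise). -/
theorem riccati_sequence_converges {p : ℕ} (φ : ℝ)
    (W : Matrix (Fin p) (Fin p) ℝ) (hW : W.PosDef) (p₀ : ℝ) (hp₀ : 0 < p₀)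
    (P : ℕ → Matrix (Fin p) (Fin p) ℝ)
    (hP0 : P 0 = p₀ • 1)
    (hPrec : ∀ t : ℕ, P (t + 1) = (φ ^ 2 • P t + W) * (φ ^ 2 • P t + W + 1)⁻¹) :
    ∃ L : Matrix (Fin p) (Fin p) ℝ, Tendsto P atTop (nhds L) := by
  have hH := hW.1
  set c : ℝ := φ ^ 2 with hc_def
  have hc : 0 ≤ c := sq_nonneg φ
  set V : Matrix (Fin p) (Fin p) ℝ := (hH.eigenvectorUnitary : Matrix (Fin p) (Fin p) ℝ)
    with hV_def
  set e : Fin p → ℝ := hH.eigenvalues with he_def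
  have he : ∀ i, 0 < e i := hW.eigenvalues_pos
  have hV1 : V * star V = 1 := (Matrix.mem_unitaryGroup_iff).mp hH.eigenvectorUnitary.2
  have hV2 : star V * V = 1 := (Matrix.mem_unitaryGroup_iff').mp hH.eigenvectorUnitary.2
  have hspec : W = V * diagonal e * star V := by
    have := hH.spectral_theorem
    simp at this
    exact this
  -- the scalar diagonal recursion
  set d : ℕ → Fin p → ℝ := fun t => Nat.rec (fun _ => p₀)
    (fun _ prev i => (c * prev i + e i) / (c * prev i + e i + 1)) t with hd_def
  have hd0 : d 0 = fun _ => p₀ := rfl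
  have hdrec : ∀ t i, d (t + 1) i = (c * d t i + e i) / (c * d t i + e i + 1) := fun t i => rfl
  have hscal : ∀ i, (∀ t, 0 ≤ d t i) ∧ ∃ l : ℝ, Tendsto (fun t => d t i) atTop (nhds l) := by
    intro i
    exact scalar_riccati_aux c (e i) hc (he i) (fun t => d t i) (le_of_lt hp₀)
      (fun t => hdrec t i)
  have hdnn : ∀ t i, 0 ≤ d t i := fun t i => (hscal i).1 t
  have hone : (1 : Matrix (Fin p) (Fin p) ℝ) = V * diagonal (fun _ : Fin p => (1 : ℝ)) * star V := by
    rw [Matrix.diagonal_one, Matrix.mul_one, hV1]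
  -- key identity : P t = V * diagonal (d t) * star V
  have key : ∀ t, P t = V * diagonal (d t) * star V := by
    intro t
    induction t with
    | zero =>
      rw [hP0, hd0]
      have h1 : diagonal (fun _ : Fin p => p₀) = p₀ • (1 : Matrix (Fin p) (Fin p) ℝ) := by
        ext i j
        by_cases hij : i = j <;> simp [Matrix.diagonal_apply, Matrix.one_apply, hij]
      rw [h1, Matrix.mul_smul, Matrix.smul_mul, Matrix.mul_one, hV1]
    | succ t ih =>
      have hsmul : c • P t = V * (c • diagonal (d t)) * star V := by
        rw [ih, ← Matrix.smul_mul, ← Matrix.mul_smul]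
      have hnum : c • P t + W = V * diagonal (fun i => c * d t i + e i) * star V := by
        rw [hsmul, hspec, ← Matrix.add_mul, ← Matrix.mul_add, ← Matrix.diagonal_smul,
          ← Matrix.diagonal_add]
        congr 2
      have hden : c • P t + W + 1
          = V * diagonal (fun i => c * d t i + e i + 1) * star V := by
        rw [hnum, hone, ← Matrix.add_mul, ← Matrix.mul_add]
        congr 2
        rw [Matrix.diagonal_add]
      have hdenpos : ∀ i, 0 < c * d t i + e i + 1 := by
        intro i
        have h1 := hdnn t i
        have h2 := he i
        nlinarith
      have hBinv : (V * diagonal (fun i => c * d t i + e i + 1) * star V)⁻¹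
          = V * diagonal (fun i => (c * d t i + e i + 1)⁻¹) * star V := by
        apply Matrix.inv_eq_right_inv
        rw [conj_mul_conj _ _ _ hV2, Matrix.diagonal_mul_diagonal]
        have h2 : (fun i => (c * d t i + e i + 1) * (c * d t i + e i + 1)⁻¹)
            = fun _ : Fin p => (1 : ℝ) :=
          funext fun i => mul_inv_cancel₀ (ne_of_gt (hdenpos i))
        rw [h2, Matrix.diagonal_one, Matrix.mul_one, hV1]
      rw [hPrec t, hden, hBinv, hnum, conj_mul_conj _ _ _ hV2, Matrix.diagonal_mul_diagonal]
      have h3 : (fun i => (c * d t i + e i) * (c * d t i + e i + 1)⁻¹) = d (t + 1) := by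
        funext i
        rw [hdrec t i, div_eq_mul_inv]
      rw [h3]
  -- limits
  choose l hl using fun i => (hscal i).2
  have hD : Tendsto (fun t => diagonal (d t)) atTop (nhds (diagonal l)) := by
    refine tendsto_pi_nhds.2 ?_
    intro i
    rw [tendsto_pi_nhds]
    intro j
    by_cases hij : i = j
    · subst hij
      simpa [Matrix.diagonal_apply_eq] using hl i
    · simp [Matrix.diagonal_apply_ne _ hij]
  refine ⟨V * diagonal l * star V, ?_⟩
  have hcont : Continuous fun M : Matrix (Fin p) (Fin p) ℝ => V * M * star V :=
    (continuous_const.matrix_mul continuous_id).matrix_mul continuous_const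
  have hfin := (hcont.tendsto (diagonal l)).comp hD
  have heq : P = fun t => V * diagonal (d t) * star V := funext key
  rw [heq]
  exact hfin
end

section
/- Given a real number φ, a positive definite p×p real matrix W, and a real constant p₀ > 0, define the sequence of matrices by P₀ = p₀·I_p and P_t = (φ²P_{t-1} + W)(φ²P_{t-1} + W + I_p)⁻¹ for t ≥ 1. Then the sequence {P_t} converges entrywise to a matrix P, and this limiting matrix commutes with W: PW = WP. -/
open Matrix Filter

private lemma riccati_scalar_conv (a lam p₀ : ℝ) (ha : 0 ≤ a) (hlam : 0 < lam) (hp₀ : 0 < p₀)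
    (x : ℕ → ℝ) (hx0 : x 0 = p₀)
    (hrec : ∀ t, x (t + 1) = (a * x t + lam) / (a * x t + lam + 1)) :
    ∃ l : ℝ, Tendsto x atTop (nhds l) := by
  have hpos : ∀ t, 0 < x t := by
    intro t
    induction t with
    | zero => simpa [hx0]
    | succ n ih =>
      rw [hrec]
      apply div_pos (by nlinarith) (by nlinarith)
  have hle1 : ∀ t, x (t + 1) ≤ 1 := by
    intro t
    rw [hrec]
    rw [div_le_one (by nlinarith [hpos t])]
    linarith
  have gmono : ∀ u v : ℝ, 0 < u → u ≤ v →
      (a * u + lam) / (a * u + lam + 1) ≤ (a * v + lam) / (a * v + lam + 1) := by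
    intro u v hu huv
    rw [div_le_div_iff₀ (by nlinarith) (by nlinarith)]
    nlinarith
  rcases le_or_gt (x 1) (x 2) with h | h
  · have key : ∀ n, x (n + 1) ≤ x (n + 2) := by
      intro n
      induction n with
      | zero => exact h
      | succ m ih =>
        rw [hrec (m + 1), hrec (m + 2)]
        exact gmono _ _ (hpos _) ih
    have hmono : Monotone (fun n => x (n + 1)) :=
      monotone_nat_of_le_succ fun n => key n
    rcases tendsto_of_monotone hmono with h' | ⟨l, hl⟩
    · exfalso
      obtain ⟨n, hn⟩ := (h'.eventually_gt_atTop 1).exists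
      exact absurd (hle1 n) (not_le.mpr hn)
    · exact ⟨l, (tendsto_add_atTop_iff_nat 1).mp hl⟩
  · have key : ∀ n, x (n + 2) ≤ x (n + 1) := by
      intro n
      induction n with
      | zero => exact h.le
      | succ m ih =>
        rw [hrec (m + 1), hrec (m + 2)]
        exact gmono _ _ (hpos _) ih
    have hmono : Antitone (fun n => x (n + 1)) :=
      antitone_nat_of_succ_le fun n => key n
    rcases tendsto_of_antitone hmono with h' | ⟨l, hl⟩
    · exfalso
      obtain ⟨n, hn⟩ := (h'.eventually_lt_atBot 0).exists
      exact absurd (hpos (n + 1)) (not_lt.mpr hn.le)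
    · exact ⟨l, (tendsto_add_atTop_iff_nat 1).mp hl⟩

private noncomputable def riccatiX {ι : Type*} (a : ℝ) (lam : ι → ℝ) (p₀ : ℝ) : ℕ → ι → ℝ
  | 0 => fun _ => p₀
  | (t + 1) => fun i =>
      (a * riccatiX a lam p₀ t i + lam i) / (a * riccatiX a lam p₀ t i + lam i + 1)

/-- With `P₀ = p₀·I` and `P_{t+1} = (φ²P_t + W)(φ²P_t + W + I)⁻¹` for positive
definite `W` and `p₀ > 0`, the sequence `{P_t}` converges entrywise to a limit `P`, and this
limit commutes with `W`. -/
theorem riccati_limit_commutes {p : ℕ} (φ : ℝ)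
    (W : Matrix (Fin p) (Fin p) ℝ) (hW : W.PosDef) (p₀ : ℝ) (hp₀ : 0 < p₀)
    (P : ℕ → Matrix (Fin p) (Fin p) ℝ)
    (hP0 : P 0 = p₀ • 1)
    (hPrec : ∀ t : ℕ, P (t + 1) = (φ ^ 2 • P t + W) * (φ ^ 2 • P t + W + 1)⁻¹) :
    ∃ L : Matrix (Fin p) (Fin p) ℝ, Tendsto P atTop (nhds L) ∧ L * W = W * L := by
  set a : ℝ := φ ^ 2 with ha_def
  have ha : 0 ≤ a := sq_nonneg φ
  have hH : W.IsHermitian := hW.1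
  set U : Matrix (Fin p) (Fin p) ℝ := (hH.eigenvectorUnitary : Matrix (Fin p) (Fin p) ℝ) with hU_def
  set lam : Fin p → ℝ := hH.eigenvalues with hlam_def
  have hlam : ∀ i, 0 < lam i := fun i => hW.eigenvalues_pos i
  have hUU : U * star U = 1 := Matrix.mem_unitaryGroup_iff.mp hH.eigenvectorUnitary.2
  have hUU' : star U * U = 1 := Matrix.mem_unitaryGroup_iff'.mp hH.eigenvectorUnitary.2
  have hspec : W = U * diagonal lam * star U := by
    have := hH.spectral_theorem
    simpa [RCLike.ofReal_real_eq_id] using this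
  set x : ℕ → Fin p → ℝ := riccatiX a lam p₀ with hx_def
  have hxpos : ∀ t i, 0 < x t i := by
    intro t
    induction t with
    | zero => intro i; simpa [hx_def, riccatiX] using hp₀
    | succ n ih =>
      intro i
      show 0 < (a * x n i + lam i) / (a * x n i + lam i + 1)
      apply div_pos (by nlinarith [ih i, hlam i]) (by nlinarith [ih i, hlam i])
  -- conjugation lemma
  have conj_mul : ∀ (A B : Matrix (Fin p) (Fin p) ℝ),
      (U * A * star U) * (U * B * star U) = U * (A * B) * star U := by
    intro A B
    simp only [mul_assoc]
    rw [← mul_assoc (star U) U, hUU', one_mul]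
  have hkey : ∀ t, P t = U * diagonal (x t) * star U := by
    intro t
    induction t with
    | zero =>
      have : diagonal (x 0) = (p₀ • 1 : Matrix (Fin p) (Fin p) ℝ) := by
        show diagonal (fun _ => p₀) = _
        ext i j
        rcases eq_or_ne i j with rfl | h
        · simp [Matrix.one_apply]
        · simp [h, Matrix.one_apply, Matrix.diagonal_apply_ne]
      rw [hP0, this]
      rw [Matrix.mul_smul, Matrix.smul_mul, mul_one, hUU]
    | succ t ih =>
      have hs : a • (U * diagonal (x t) * star U)
          = U * diagonal (fun i => a * x t i) * star U := by
        rw [show (fun i => a * x t i) = a • x t from rfl, Matrix.diagonal_smul,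
          mul_smul_comm, smul_mul_assoc]
      have hsum : a • P t + W = U * diagonal (fun i => a * x t i + lam i) * star U := by
        rw [ih, hspec, hs, ← Matrix.add_mul, ← Matrix.mul_add, Matrix.diagonal_add]
      have h1 : (1 : Matrix (Fin p) (Fin p) ℝ) = U * diagonal (fun _ => (1:ℝ)) * star U := by
        rw [Matrix.diagonal_one, mul_one, hUU]
      have hsum1 : a • P t + W + 1 =
          U * diagonal (fun i => a * x t i + lam i + 1) * star U := by
        rw [hsum, h1, ← Matrix.add_mul, ← Matrix.mul_add, Matrix.diagonal_add]
      have hden : ∀ i, a * x t i + lam i + 1 ≠ 0 := by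
        intro i; nlinarith [hxpos t i, hlam i]
      have hinv : (a • P t + W + 1)⁻¹ =
          U * diagonal (fun i => (a * x t i + lam i + 1)⁻¹) * star U := by
        apply Matrix.inv_eq_right_inv
        rw [hsum1, conj_mul, Matrix.diagonal_mul_diagonal]
        have : (fun i => (a * x t i + lam i + 1) * (a * x t i + lam i + 1)⁻¹) =
            fun _ => (1:ℝ) := by
          funext i; exact mul_inv_cancel₀ (hden i)
        rw [this, Matrix.diagonal_one, mul_one, hUU]
      rw [hPrec t, hinv, hsum, conj_mul, Matrix.diagonal_mul_diagonal]
      have : (fun i => (a * x t i + lam i) * (a * x t i + lam i + 1)⁻¹) = x (t + 1) := by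
        funext i
        exact (div_eq_mul_inv _ _).symm
      rw [this]
  -- scalar convergence for each coordinate
  have hconv : ∀ i, ∃ l : ℝ, Tendsto (fun t => x t i) atTop (nhds l) := by
    intro i
    exact riccati_scalar_conv a (lam i) p₀ ha (hlam i) hp₀ (fun t => x t i) rfl
      (fun t => rfl)
  choose l hl using hconv
  refine ⟨U * diagonal l * star U, ?_, ?_⟩
  · have hdiag : Tendsto (fun t => diagonal (x t)) atTop (nhds (diagonal l)) := by
      apply tendsto_pi_nhds.mpr
      intro i
      rw [tendsto_pi_nhds]
      intro j
      by_cases hij : i = j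
      · subst hij
        simpa [Matrix.diagonal_apply_eq] using hl i
      · simpa [Matrix.diagonal_apply_ne _ hij] using tendsto_const_nhds
    have : Tendsto (fun t => U * diagonal (x t) * star U) atTop
        (nhds (U * diagonal l * star U)) :=
      (tendsto_const_nhds.mul hdiag).mul tendsto_const_nhds
    exact this.congr (fun t => (hkey t).symm)
  · rw [hspec, conj_mul, conj_mul, Matrix.diagonal_mul_diagonal, Matrix.diagonal_mul_diagonal]
    have : (fun i => l i * lam i) = fun i => lam i * l i := by
      funext i
      exact mul_comm _ _
    rw [this]
end
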